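/- Let Y be a persistence module over a field K with a basis {y_1,…,y_N} realizing intervals whose critical values are pairwise distinct with pairwise distance greater than 2ε, and let X be a persistence module with a basis B_X = {x_1,…,x_{N+1}} realizing intervals [b_1,d_1),…,[b_N,d_N),[b,d), where the critical values b_1,…,b_N,d_1,…,d_N are pairwise distinct with pairwise distance greater than 2ε, |b_i − birth(y_i)| < ε and |d_i − death(y_i)| < ε for i ≤ N, the extra interval satisfies d − b < 2ε, and both b and d are at distance at least 2ε from every b_i and d_i. Suppose α : X → Y and β : Y → X form an ε-interleaving, and let B_Y be the extended basis {y_1,…,y_N, y_{N+1} = 0}. Then: (1) Mat_{B_X}^{B_Y}(α)(N+1, i) = 0 = Mat_{B_X}^{B_Y}(α)(i, N+1) for all i; (2) the restriction of Mat_{B_X}^{B_Y}(α) to the indices 1,…,N is a basis transformation matrix for Y, and for the extended basis B_Y^{new} obtained by applying this restricted matrix to {y_1,…,y_N} and keeping the zero element, Mat_{B_X}^{B_Y^{new}}(α) = diag(1,…,1,0) = Mat_{B_Y^{new}}^{B_X}(β); (3) symmetrically, the restriction of Mat_{B_Y}^{B_X}(β) to the indices 1,…,N is a basis transformation matrix with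 respect to {x_1,…,x_N}, and extending it by the entry 1 in position (N+1,N+1) yields a basis transformation matrix for X; for the resulting new basis B_X^{new}, Mat_{B_X^{new}}^{B_Y}(α) = diag(1,…,1,0) = Mat_{B_Y}^{B_X^{new}}(β). -/

import Mathlib

open scoped BigOperators

universe u v

/-- A persistence module over a field `K`. -/
structure PersistenceModule (K : Type u) [Field K] where
  space : ℝ → Type v
  [instAdd : ∀ t, AddCommGroup (space t)]
  [instMod : ∀ t, Module K (space t)]
  trans : ∀ s t : ℝ, s ≤ t → (space s →ₗ[K] space t)
  trans_self : ∀ (t : ℝ) (h : t ≤ t), trans t t h = LinearMap.id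
  trans_trans : ∀ (r s t : ℝ) (hrs : r ≤ s) (hst : s ≤ t) (x : space r),
      trans s t hst (trans r s hrs x) = trans r t (hrs.trans hst) x

attribute [instance] PersistenceModule.instAdd PersistenceModule.instMod

namespace PersistenceModule

variable {K : Type u} [Field K]

/-- `x ∈ X_t` is born at `t` if it is not in the image of any earlier transition map. -/
def BornAt (X : PersistenceModule K) (t : ℝ) (x : X.space t) : Prop :=
  ∀ (s : ℝ) (h : s < t), x ∉ Set.range (X.trans s t h.le)

/-- The death time of an element `x ∈ X_t`. -/
noncomputable def death (X : PersistenceModule K) (t : ℝ) (x : X.space t) : ℝ :=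
  sInf {s : ℝ | ∃ h : t < s, X.trans t s h.le x = 0}

/-- `x` is a basis of `X` realizing the intervals `[b i, d i)`. -/
def IsBasisFamily {ι : Type*} (X : PersistenceModule K) (b d : ι → ℝ)
    (x : ∀ i, X.space (b i)) : Prop :=
  (∀ i, X.BornAt (b i) (x i)) ∧
  (∀ i, X.death (b i) (x i) = d i) ∧
  (∀ t : ℝ,
    LinearIndependent K
      (fun i : {i : ι // b i ≤ t ∧ t < d i} => X.trans (b i.1) t i.2.1 (x i.1)) ∧
    Submodule.span K (Set.range
      (fun i : {i : ι // b i ≤ t ∧ t < d i} => X.trans (b i.1) t i.2.1 (x i.1))) = ⊤)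

open scoped Classical in
/-- The image of the basis element `x j` at height `h` (or `0` if not yet born). -/
noncomputable def pushTo {ι : Type*} (X : PersistenceModule K) (b : ι → ℝ)
    (x : ∀ i, X.space (b i)) (h : ℝ) (j : ι) : X.space h :=
  if hb : b j ≤ h then X.trans (b j) h hb (x j) else 0

end PersistenceModule

/-- An `ε`-morphism of persistence modules. -/
structure EpsMorphism {K : Type u} [Field K] (X Y : PersistenceModule K) (ε : ℝ) where
  maps : ∀ r r' : ℝ, r + ε = r' → (X.space r →ₗ[K] Y.space r')
  comm : ∀ (s t s' t' : ℝ) (hs : s + ε = s') (ht : t + ε = t') (hst : s ≤ t)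
      (x : X.space s),
    maps t t' ht (X.trans s t hst x) = Y.trans s' t' (by linarith) (maps s s' hs x)

/-- A pair of `ε`-morphisms forming an `ε`-interleaving. -/
def IsInterleaving {K : Type u} [Field K] (X Y : PersistenceModule K) (ε : ℝ)
    (F : EpsMorphism X Y ε) (G : EpsMorphism Y X ε) : Prop :=
  (∀ (r r'' : ℝ) (h : r + ε + ε = r'') (hr : r ≤ r'') (x : X.space r),
      G.maps (r + ε) r'' (by linarith) (F.maps r (r + ε) rfl x) = X.trans r r'' hr x) ∧
  (∀ (r r'' : ℝ) (h : r + ε + ε = r'') (hr : r ≤ r'') (y : Y.space r),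
      F.maps (r + ε) r'' (by linarith) (G.maps r (r + ε) rfl y) = Y.trans r r'' hr y)

/-- `A` is the matrix of the `ε`-morphism `α` with respect to the bases `x` of `X`
(realizing `[bX i, dX i)`) and `y` of `Y` (realizing `[bY j, dY j)`). -/
def IsMatrixOf {K : Type u} [Field K] {X Y : PersistenceModule K} {ε : ℝ}
    {N M : ℕ} (α : EpsMorphism X Y ε)
    (bX dX : Fin N → ℝ) (x : ∀ i, X.space (bX i))
    (bY dY : Fin M → ℝ) (y : ∀ j, Y.space (bY j))
    (A : Matrix (Fin M) (Fin N) K) : Prop :=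
  (∀ i, α.maps (bX i) (bX i + ε) rfl (x i)
      = ∑ j, A j i • Y.pushTo bY y (bX i + ε) j) ∧
  (∀ (j : Fin M) (i : Fin N), ¬ (bY j ≤ bX i + ε ∧ bX i + ε < dY j) → A j i = 0)

/-- A basis transformation matrix. -/
def IsBasisTransformMatrix {K : Type u} [Field K] {N : ℕ} (b d : Fin N → ℝ)
    (A : Matrix (Fin N) (Fin N) K) : Prop :=
  (∀ i, A i i ≠ 0) ∧ ∀ j i, A j i ≠ 0 → b j ≤ b i ∧ d j ≤ d i

/-- The transformed family `A(B)`: `x_i^new = ∑ j A j i • φ(x_j)`. -/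
noncomputable def transformBasis {K : Type u} [Field K] {N : ℕ} (X : PersistenceModule K)
    (b : Fin N → ℝ) (x : ∀ i, X.space (b i)) (A : Matrix (Fin N) (Fin N) K)
    (i : Fin N) : X.space (b i) :=
  ∑ j, A j i • X.pushTo b x (b i) j

/-- The elementary matrix `e_{lk}^μ`: identity with extra entry `μ` in position `(k, l)`. -/
def eMat {K : Type u} [Field K] {N : ℕ} (l k : Fin N) (μ : K) : Matrix (Fin N) (Fin N) K :=
  1 + Matrix.single k l μ

/-!
Composing the matrix identities with `β ∘ α = φ^{2ε}` and comparing coefficients of the bars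
still alive shows that the two matrices are mutually inverse on those bars; in particular their
diagonal entries are nonzero. An entry `(j, i)` of the matrix of an `ε`-morphism can only be
nonzero if `b_j ≤ b_i + ε` and `d_j ≤ d_i + ε`; the `2ε`-gaps between critical values sharpen
this to `b_j ≤ b_i` and `d_j ≤ d_i` for the long bars, and leave no partner at all for the short
bar `[b, d)`. After the change of basis `α x_i = y_i^new` holds by construction, and the
identities for `β` follow by cancelling transition maps, which are injective on the short time
windows involved because no bar dies there.
-/

section Gaps

variable {ι : Type*} {v : ι → ℝ} {c : ℝ}

lemma add_lt_of_lt_of_gap (hgap : ∀ p q, p ≠ q → c < |v p - v q|) {p q : ι}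
    (h : v p < v q) : v p + c < v q := by
  have := hgap p q (fun hpq => by simp [hpq] at h)
  rw [abs_sub_comm, abs_of_pos (sub_pos.2 h)] at this
  linarith

lemma le_of_le_add_of_gap (hgap : ∀ p q, p ≠ q → c < |v p - v q|) {p q : ι}
    (h : v p ≤ v q + c) : v p ≤ v q :=
  not_lt.1 fun hqp => (add_lt_of_lt_of_gap hgap hqp).not_ge h

lemma eq_of_abs_sub_le_of_gap (hgap : ∀ p q, p ≠ q → c < |v p - v q|) {p q : ι}
    (h : |v p - v q| ≤ c) : p = q :=
  by_contra fun hpq => (hgap p q hpq).not_ge h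

lemma exists_gt_forall_lt_of_lt [Finite ι] (d : ι → ℝ) (t : ℝ) :
    ∃ u, t < u ∧ ∀ j, t < d j → u < d j := by
  have : ∀ᶠ u in nhdsWithin t (Set.Ioi t), ∀ j, t < d j → u < d j :=
    Filter.eventually_all.2 fun j => by
      by_cases hj : t < d j
      · exact ((eventually_lt_nhds hj).filter_mono nhdsWithin_le_nhds).mono fun _ hu _ => hu
      · exact Filter.Eventually.of_forall fun _ h => (hj h).elim
  obtain ⟨u, hu, htu⟩ := (this.and self_mem_nhdsWithin).exists
  exact ⟨u, htu, hu⟩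

end Gaps

namespace PersistenceModule

variable {K : Type u} [Field K] {ι : Type*} {X : PersistenceModule K} {b d : ι → ℝ}
  {x : ∀ i, X.space (b i)}

lemma pushTo_of_le {t : ℝ} {j : ι} (hj : b j ≤ t) :
    X.pushTo b x t j = X.trans (b j) t hj (x j) :=
  dif_pos hj

lemma pushTo_of_lt {t : ℝ} {j : ι} (hj : t < b j) : X.pushTo b x t j = 0 :=
  dif_neg hj.not_ge

lemma pushTo_self (i : ι) : X.pushTo b x (b i) i = x i := by
  rw [pushTo_of_le le_rfl, X.trans_self, LinearMap.id_apply]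

lemma trans_pushTo {s t : ℝ} (h : s ≤ t) {j : ι} (hj : b j ≤ s) :
    X.trans s t h (X.pushTo b x s j) = X.pushTo b x t j := by
  rw [pushTo_of_le hj, pushTo_of_le (hj.trans h), X.trans_trans]

lemma trans_sum_smul_pushTo [Fintype ι] {s t : ℝ} (h : s ≤ t) (c : ι → K)
    (hc : ∀ j, c j ≠ 0 → b j ≤ s) :
    X.trans s t h (∑ j, c j • X.pushTo b x s j) = ∑ j, c j • X.pushTo b x t j := by
  rw [map_sum]
  refine Finset.sum_congr rfl fun j _ => ?_
  by_cases hj : c j = 0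
  · simp [hj]
  · rw [map_smul, trans_pushTo h (hc j hj)]

namespace IsBasisFamily

lemma eq_zero_of_forall_not_alive (hX : X.IsBasisFamily b d x) {t : ℝ}
    (h : ∀ i, ¬ (b i ≤ t ∧ t < d i)) (v : X.space t) : v = 0 := by
  have hspan := (hX.2.2 t).2
  have : IsEmpty {i // b i ≤ t ∧ t < d i} := ⟨fun i => h i.1 i.2⟩
  rw [Set.range_eq_empty, Submodule.span_empty] at hspan
  simpa [← hspan] using (Submodule.mem_top : v ∈ (⊤ : Submodule K (X.space t)))

lemma trans_injective (hX : X.IsBasisFamily b d x) {s t : ℝ} (hst : s ≤ t)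
    (h : ∀ i, b i ≤ s → s < d i → t < d i) : Function.Injective (X.trans s t hst) := by
  refine LinearMap.injective_of_linearIndependent (hX.2.2 s).2 ?_
  have hcomp : X.trans s t hst ∘
      (fun i : {i // b i ≤ s ∧ s < d i} => X.trans (b i.1) s i.2.1 (x i.1)) =
      (fun i : {i // b i ≤ t ∧ t < d i} => X.trans (b i.1) t i.2.1 (x i.1)) ∘
        fun i => ⟨i.1, i.2.1.trans hst, h i.1 i.2.1 i.2.2⟩ := by
    funext i
    exact X.trans_trans _ _ _ _ _ _
  rw [hcomp]
  exact (hX.2.2 t).1.comp _ fun i j hij => Subtype.ext (by simpa using hij)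

lemma exists_trans_eq_zero [Finite ι] (hX : X.IsBasisFamily b d x) (i : ι) {u : ℝ}
    (hu : d i < u) : ∃ s < u, ∃ h : b i < s, X.trans (b i) s h.le (x i) = 0 := by
  obtain ⟨m, hm⟩ := Finite.bddAbove_range d
  have hlate : max m (b i) + 1 ∈ {s | ∃ h : b i < s, X.trans (b i) s h.le (x i) = 0} := by
    refine ⟨by linarith [le_max_right m (b i)], hX.eq_zero_of_forall_not_alive ?_ _⟩
    rintro j ⟨-, hj⟩
    linarith [hm ⟨j, rfl⟩, le_max_left m (b i)]
  obtain ⟨s, hs, hsu⟩ := exists_lt_of_csInf_lt ⟨_, hlate⟩ ((hX.2.1 i).symm ▸ hu)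
  exact ⟨s, hsu, hs⟩

/-- `death` is only an infimum, but with finitely many bars the element is already zero at
its death time: just after `t` there is a window in which the transition is injective. -/
lemma pushTo_eq_zero_of_death_le [Finite ι] (hX : X.IsBasisFamily b d x) {i : ι} {t : ℝ}
    (h : d i ≤ t) : X.pushTo b x t i = 0 := by
  by_cases hbt : b i ≤ t
  swap
  · exact pushTo_of_lt (not_le.1 hbt)
  obtain ⟨u, htu, hu⟩ := exists_gt_forall_lt_of_lt d t
  obtain ⟨s, hsu, hbs, hs⟩ := hX.exists_trans_eq_zero i (h.trans_lt htu)
  rcases le_or_gt s t with hst | hts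
  · rw [pushTo_of_le hbt, ← X.trans_trans _ _ _ hbs.le hst, hs, map_zero]
  · refine hX.trans_injective hts.le (fun j _ hj => hsu.trans (hu j hj)) ?_
    rw [map_zero, trans_pushTo hts.le hbt, pushTo_of_le hbs.le, hs]

lemma coeff_eq_zero [Fintype ι] (hX : X.IsBasisFamily b d x) (c : ι → K) {t : ℝ}
    (h : ∑ k, c k • X.pushTo b x t k = 0) {k : ι} (hbk : b k ≤ t) (hdk : t < d k) :
    c k = 0 := by
  have hnot : ∀ j : {j // ¬ (b j ≤ t ∧ t < d j)}, c j • X.pushTo b x t j = 0 := by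
    rintro ⟨j, hj⟩
    rcases not_and_or.1 hj with hb | hd
    · rw [pushTo_of_lt (not_le.1 hb), smul_zero]
    · rw [hX.pushTo_eq_zero_of_death_le (not_lt.1 hd), smul_zero]
  rw [← Fintype.sum_subtype_add_sum_subtype (fun j => b j ≤ t ∧ t < d j),
    Fintype.sum_eq_zero _ hnot, add_zero] at h
  refine Fintype.linearIndependent_iff.1 (hX.2.2 t).1 (fun j => c j) ?_ ⟨k, hbk, hdk⟩
  convert h using 2 with j
  rw [pushTo_of_le j.2.1]

end IsBasisFamily

end PersistenceModule

open PersistenceModule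

section Morphisms

variable {K : Type u} [Field K] {X Y : PersistenceModule K} {ε : ℝ}

lemma IsInterleaving.symm {F : EpsMorphism X Y ε} {G : EpsMorphism Y X ε}
    (hFG : IsInterleaving X Y ε F G) : IsInterleaving Y X ε G F :=
  ⟨hFG.2, hFG.1⟩

lemma IsInterleaving.map_eq_trans_of_map_eq_trans {F : EpsMorphism X Y ε}
    {G : EpsMorphism Y X ε} (hFG : IsInterleaving X Y ε F G) (hε : 0 ≤ ε) {M : ℕ}
    {bX dX : Fin M → ℝ} {x : ∀ i, X.space (bX i)} (hX : X.IsBasisFamily bX dX x)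
    {r s : ℝ} {p : X.space s} {q : Y.space r} (hrs : r ≤ s + ε) (hsr : s ≤ r + ε)
    (hsurvive : ∀ i, bX i ≤ r + ε → r + ε < dX i → s + ε + ε < dX i)
    (h : F.maps s (s + ε) rfl p = Y.trans r (s + ε) hrs q) :
    G.maps r (r + ε) rfl q = X.trans s (r + ε) hsr p := by
  refine hX.trans_injective (by linarith) hsurvive ?_
  rw [← G.comm r (s + ε) (r + ε) (s + ε + ε) rfl rfl hrs q, ← h,
    hFG.1 s (s + ε + ε) rfl (by linarith) p, X.trans_trans]

namespace IsMatrixOf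

variable {M N : ℕ} {α : EpsMorphism X Y ε} {bX dX : Fin M → ℝ} {x : ∀ i, X.space (bX i)}
  {bY dY : Fin N → ℝ} {y : ∀ j, Y.space (bY j)} {A : Matrix (Fin N) (Fin M) K}

lemma birth_le (hA : IsMatrixOf α bX dX x bY dY y A) {j : Fin N} {i : Fin M}
    (h : A j i ≠ 0) : bY j ≤ bX i + ε ∧ bX i + ε < dY j :=
  by_contra fun h' => h (hA.2 j i h')

lemma map_pushTo (hA : IsMatrixOf α bX dX x bY dY y A) {i : Fin M} {t : ℝ}
    (hi : bX i ≤ t) :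
    α.maps t (t + ε) rfl (X.pushTo bX x t i) = ∑ j, A j i • Y.pushTo bY y (t + ε) j := by
  rw [pushTo_of_le hi, α.comm _ _ _ _ rfl rfl hi, hA.1 i,
    trans_sum_smul_pushTo _ _ fun j hj => (hA.birth_le hj).1]

lemma death_le (hA : IsMatrixOf α bX dX x bY dY y A) (hX : X.IsBasisFamily bX dX x)
    (hY : Y.IsBasisFamily bY dY y) (hbdX : ∀ i, bX i < dX i) {j : Fin N} {i : Fin M}
    (h : A j i ≠ 0) : dY j ≤ dX i + ε := by
  by_contra! hlt
  have hzero : ∑ j, A j i • Y.pushTo bY y (dX i + ε) j = 0 := by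
    rw [← hA.map_pushTo (hbdX i).le, hX.pushTo_eq_zero_of_death_le le_rfl, map_zero]
  exact h (hY.coeff_eq_zero _ hzero (by linarith [(hA.birth_le h).1, hbdX i]) hlt)

lemma _root_.IsInterleaving.mul_apply_eq_one_apply {G : EpsMorphism Y X ε}
    {B : Matrix (Fin M) (Fin N) K} (hFG : IsInterleaving X Y ε α G) (hε : 0 ≤ ε)
    (hX : X.IsBasisFamily bX dX x)
    (hA : IsMatrixOf α bX dX x bY dY y A) (hB : IsMatrixOf G bY dY y bX dX x B)
    {i k : Fin M} (hbk : bX k ≤ bX i + ε + ε) (hdk : bX i + ε + ε < dX k) :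
    (B * A) k i = (1 : Matrix (Fin M) (Fin M) K) k i := by
  have hround : G.maps (bX i + ε) (bX i + ε + ε) (by linarith) (α.maps (bX i) _ rfl (x i)) =
      ∑ k, (B * A) k i • X.pushTo bX x (bX i + ε + ε) k := by
    rw [hA.1 i, map_sum]
    calc ∑ j, G.maps (bX i + ε) (bX i + ε + ε) _ (A j i • Y.pushTo bY y (bX i + ε) j)
        = ∑ j, A j i • ∑ k, B k j • X.pushTo bX x (bX i + ε + ε) k := by
          refine Finset.sum_congr rfl fun j _ => ?_
          by_cases hj : A j i = 0
          · simp [hj]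
          · rw [map_smul, hB.map_pushTo (hA.birth_le hj).1]
      _ = ∑ k, (B * A) k i • X.pushTo bX x (bX i + ε + ε) k := by
          simp_rw [Finset.smul_sum, smul_smul, Matrix.mul_apply, Finset.sum_smul]
          rw [Finset.sum_comm]
          simp_rw [mul_comm]
  have hid : X.trans (bX i) (bX i + ε + ε) (by linarith) (x i) =
      ∑ k, (1 : Matrix (Fin M) (Fin M) K) k i • X.pushTo bX x (bX i + ε + ε) k := by
    simp [Matrix.one_apply, pushTo_of_le (show bX i ≤ bX i + ε + ε by linarith)]
  have hdiff : ∑ k, ((B * A) k i - (1 : Matrix (Fin M) (Fin M) K) k i) •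
      X.pushTo bX x (bX i + ε + ε) k = 0 := by
    simp_rw [sub_smul, Finset.sum_sub_distrib, ← hround, ← hid,
      hFG.1 (bX i) _ rfl (by linarith) (x i), sub_self]
  exact sub_eq_zero.1 (hX.coeff_eq_zero _ hdiff hbk hdk)

lemma isBasisTransformMatrix_submatrix (hA : IsMatrixOf α bX dX x bY dY y A)
    (hX : X.IsBasisFamily bX dX x) (hY : Y.IsBasisFamily bY dY y) (hbdX : ∀ i, bX i < dX i)
    {n : ℕ} (σ : Fin n → Fin M) (τ : Fin n → Fin N)
    (hb : ∀ i, |bX (σ i) - bY (τ i)| < ε) (hd : ∀ i, |dX (σ i) - dY (τ i)| < ε)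
    (hgap : ∀ p q : Fin n ⊕ Fin n, p ≠ q →
      2 * ε < |Sum.elim (fun i => bY (τ i)) (fun i => dY (τ i)) p -
        Sum.elim (fun i => bY (τ i)) (fun i => dY (τ i)) q|)
    (hdiag : ∀ i, A (τ i) (σ i) ≠ 0) :
    IsBasisTransformMatrix (fun i => bY (τ i)) (fun i => dY (τ i)) (A.submatrix τ σ) := by
  refine ⟨hdiag, fun j i h => ⟨?_, ?_⟩⟩
  · refine le_of_le_add_of_gap hgap (p := .inl j) (q := .inl i)
      (show bY (τ j) ≤ bY (τ i) + 2 * ε by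
        linarith [(hA.birth_le h).1, (abs_sub_lt_iff.1 (hb i)).1])
  · refine le_of_le_add_of_gap hgap (p := .inr j) (q := .inr i)
      (show dY (τ j) ≤ dY (τ i) + 2 * ε by
        linarith [hA.death_le hX hY hbdX h, (abs_sub_lt_iff.1 (hd i)).1])

lemma map_eq_pushTo_transformBasis (hA : IsMatrixOf α bX dX x bY dY y A)
    {P : Matrix (Fin N) (Fin N) K} (hP : ∀ j i, P j i ≠ 0 → bY j ≤ bY i) {s : Fin M}
    {t : Fin N} (hcol : ∀ j, P j t = A j s) (ht : bY t ≤ bX s + ε) :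
    α.maps (bX s) (bX s + ε) rfl (x s) =
      Y.pushTo bY (transformBasis Y bY y P) (bX s + ε) t := by
  rw [pushTo_of_le ht, transformBasis, trans_sum_smul_pushTo _ _ fun j hj => hP j t hj,
    hA.1 s]
  simp only [hcol]

end IsMatrixOf

end Morphisms

section Statement9

variable {K : Type u} [Field K] {N : ℕ}

/-- `A` is the matrix of the `ε`-morphism `F : X → Y` with respect to the basis
`x` of `X` (of size `N+1`) and the extended basis of `Y` consisting of the basis `y`
(of size `N`, reindexed along `Fin.castSucc`) together with a zero element at the last
index.  The row at the index of the zero element is zero by convention. -/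
def IsExtMatrixXY (X Y : PersistenceModule K) (ε : ℝ)
    (bX : Fin (N + 1) → ℝ) (bY dY : Fin N → ℝ)
    (x : ∀ i, X.space (bX i)) (y : ∀ j, Y.space (bY j))
    (F : EpsMorphism X Y ε) (A : Matrix (Fin (N + 1)) (Fin (N + 1)) K) : Prop :=
  (∀ i, F.maps (bX i) (bX i + ε) rfl (x i)
      = ∑ j : Fin N, A j.castSucc i • Y.pushTo bY y (bX i + ε) j) ∧
  (∀ (j : Fin N) (i : Fin (N + 1)),
      ¬ (bY j ≤ bX i + ε ∧ bX i + ε < dY j) → A j.castSucc i = 0) ∧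
  (∀ i, A (Fin.last N) i = 0)

/-- `B` is the matrix of the `ε`-morphism `G : Y → X` with respect to the extended basis of
`Y` (basis `y` of size `N` plus a zero element at the last index) and the basis `x` of `X`
(of size `N+1`).  The column at the index of the zero element is zero by convention. -/
def IsExtMatrixYX (X Y : PersistenceModule K) (ε : ℝ)
    (bX dX : Fin (N + 1) → ℝ) (bY : Fin N → ℝ)
    (x : ∀ i, X.space (bX i)) (y : ∀ j, Y.space (bY j))
    (G : EpsMorphism Y X ε) (B : Matrix (Fin (N + 1)) (Fin (N + 1)) K) : Prop :=
  (∀ j : Fin N, G.maps (bY j) (bY j + ε) rfl (y j)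
      = ∑ i : Fin (N + 1), B i j.castSucc • X.pushTo bX x (bY j + ε) i) ∧
  (∀ (i : Fin (N + 1)) (j : Fin N),
      ¬ (bX i ≤ bY j + ε ∧ bY j + ε < dX i) → B i j.castSucc = 0) ∧
  (∀ i, B i (Fin.last N) = 0)

open scoped Classical in
/-- Replace the last row and column of `B` by those of the identity matrix. -/
noncomputable def extendOne (B : Matrix (Fin (N + 1)) (Fin (N + 1)) K) :
    Matrix (Fin (N + 1)) (Fin (N + 1)) K :=
  fun i j => if i = Fin.last N ∨ j = Fin.last N then (if i = j then 1 else 0) else B i j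

open scoped Classical in
/-- The diagonal matrix `diag(1, …, 1, 0)`. -/
noncomputable def diagOneZero : Matrix (Fin (N + 1)) (Fin (N + 1)) K :=
  Matrix.diagonal fun i => if i = Fin.last N then 0 else 1

section ExtendedBases

lemma extendOne_castSucc (B : Matrix (Fin (N + 1)) (Fin (N + 1)) K) (i j : Fin N) :
    extendOne B i.castSucc j.castSucc = B i.castSucc j.castSucc := by
  simp [extendOne, Fin.castSucc_ne_last]

lemma extendOne_last_left (B : Matrix (Fin (N + 1)) (Fin (N + 1)) K) (j : Fin (N + 1)) :
    extendOne B (Fin.last N) j = if Fin.last N = j then 1 else 0 := by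
  simp [extendOne]

lemma extendOne_last_right (B : Matrix (Fin (N + 1)) (Fin (N + 1)) K) (i : Fin (N + 1)) :
    extendOne B i (Fin.last N) = if i = Fin.last N then 1 else 0 := by
  simp [extendOne]

lemma extendOne_apply_castSucc {B : Matrix (Fin (N + 1)) (Fin (N + 1)) K} {j : Fin N}
    (hB : B (Fin.last N) j.castSucc = 0) (i : Fin (N + 1)) :
    extendOne B i j.castSucc = B i j.castSucc := by
  induction i using Fin.lastCases with
  | last => rw [extendOne_last_left, hB, if_neg (Fin.castSucc_ne_last j).symm]
  | cast i => exact extendOne_castSucc B i j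

lemma IsBasisTransformMatrix.extendOne {b d : Fin (N + 1) → ℝ}
    {B : Matrix (Fin (N + 1)) (Fin (N + 1)) K}
    (hB : IsBasisTransformMatrix (fun i : Fin N => b i.castSucc) (fun i => d i.castSucc)
      (B.submatrix Fin.castSucc Fin.castSucc)) :
    IsBasisTransformMatrix b d (extendOne B) := by
  refine ⟨fun i => ?_, fun j i h => ?_⟩
  · induction i using Fin.lastCases with
    | last => simp [extendOne_last_left]
    | cast i => rw [extendOne_castSucc]; exact hB.1 i
  · induction j using Fin.lastCases with
    | last =>
      rw [extendOne_last_left] at h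
      obtain rfl : Fin.last N = i := by by_contra hi; simp [hi] at h
      exact ⟨le_rfl, le_rfl⟩
    | cast j =>
      induction i using Fin.lastCases with
      | last => simp [extendOne_last_right, Fin.castSucc_ne_last] at h
      | cast i => rw [extendOne_castSucc] at h; exact hB.2 j i h

lemma transformBasis_extendOne_last (X : PersistenceModule K) (b : Fin (N + 1) → ℝ)
    (x : ∀ i, X.space (b i)) (B : Matrix (Fin (N + 1)) (Fin (N + 1)) K) :
    transformBasis X b x (extendOne B) (Fin.last N) = x (Fin.last N) := by
  simp [transformBasis, extendOne_last_right, pushTo_self]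

lemma diagOneZero_last_left (i : Fin (N + 1)) :
    (diagOneZero : Matrix (Fin (N + 1)) (Fin (N + 1)) K) (Fin.last N) i = 0 := by
  by_cases h : Fin.last N = i <;> simp [diagOneZero, h]

lemma diagOneZero_last_right (i : Fin (N + 1)) :
    (diagOneZero : Matrix (Fin (N + 1)) (Fin (N + 1)) K) i (Fin.last N) = 0 := by
  by_cases h : i = Fin.last N <;> simp [diagOneZero, h]

lemma diagOneZero_castSucc (i j : Fin N) :
    (diagOneZero : Matrix (Fin (N + 1)) (Fin (N + 1)) K) i.castSucc j.castSucc =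
      (1 : Matrix (Fin N) (Fin N) K) i j := by
  by_cases h : i = j <;> simp [diagOneZero, Matrix.one_apply, h, Fin.castSucc_ne_last]

variable {X Y : PersistenceModule K} {ε : ℝ} {bX dX : Fin (N + 1) → ℝ}
  {bY dY : Fin N → ℝ} {x : ∀ i, X.space (bX i)} {y : ∀ j, Y.space (bY j)}

lemma IsExtMatrixXY.isMatrixOf {F : EpsMorphism X Y ε}
    {A : Matrix (Fin (N + 1)) (Fin (N + 1)) K} (hA : IsExtMatrixXY X Y ε bX bY dY x y F A)
    (dX : Fin (N + 1) → ℝ) :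
    IsMatrixOf F bX dX x bY dY y (A.submatrix Fin.castSucc id) :=
  ⟨hA.1, hA.2.1⟩

lemma IsExtMatrixYX.isMatrixOf {G : EpsMorphism Y X ε}
    {B : Matrix (Fin (N + 1)) (Fin (N + 1)) K} (hB : IsExtMatrixYX X Y ε bX dX bY x y G B)
    (dY : Fin N → ℝ) : IsMatrixOf G bY dY y bX dX x (B.submatrix id Fin.castSucc) :=
  ⟨hB.1, hB.2.1⟩

lemma isExtMatrixXY_diagOneZero {F : EpsMorphism X Y ε}
    (hmap : ∀ i : Fin N, F.maps (bX i.castSucc) (bX i.castSucc + ε) rfl (x i.castSucc) =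
      Y.pushTo bY y (bX i.castSucc + ε) i)
    (hlast : F.maps (bX (Fin.last N)) (bX (Fin.last N) + ε) rfl (x (Fin.last N)) = 0)
    (halive : ∀ i, bY i ≤ bX i.castSucc + ε ∧ bX i.castSucc + ε < dY i) :
    IsExtMatrixXY X Y ε bX bY dY x y F diagOneZero := by
  refine ⟨fun i => ?_, fun j i hji => ?_, diagOneZero_last_left⟩
  · induction i using Fin.lastCases with
    | last => simp [hlast, diagOneZero_last_right]
    | cast i => simp [hmap, diagOneZero_castSucc, Matrix.one_apply]
  · induction i using Fin.lastCases with
    | last => exact diagOneZero_last_right _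
    | cast i =>
      rw [diagOneZero_castSucc, Matrix.one_apply, if_neg]
      rintro rfl
      exact hji (halive j)

lemma isExtMatrixYX_diagOneZero {G : EpsMorphism Y X ε}
    (hmap : ∀ j : Fin N, G.maps (bY j) (bY j + ε) rfl (y j) =
      X.pushTo bX x (bY j + ε) j.castSucc)
    (halive : ∀ j, bX j.castSucc ≤ bY j + ε ∧ bY j + ε < dX j.castSucc) :
    IsExtMatrixYX X Y ε bX dX bY x y G diagOneZero := by
  refine ⟨fun j => ?_, fun i j hij => ?_, diagOneZero_last_right⟩
  · simp [hmap, Fin.sum_univ_castSucc, diagOneZero_castSucc, diagOneZero_last_left,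
      Matrix.one_apply]
  · induction i using Fin.lastCases with
    | last => exact diagOneZero_last_left _
    | cast i =>
      rw [diagOneZero_castSucc, Matrix.one_apply, if_neg]
      rintro rfl
      exact hij (halive i)

end ExtendedBases

section ShortBar

variable {X Y : PersistenceModule K} {ε : ℝ} {bX dX : Fin (N + 1) → ℝ}
  {bY dY : Fin N → ℝ} {x : ∀ i, X.space (bX i)} {y : ∀ j, Y.space (bY j)}

lemma IsExtMatrixYX.apply_last_castSucc_eq_zero {G : EpsMorphism Y X ε}
    {B : Matrix (Fin (N + 1)) (Fin (N + 1)) K} (hB : IsExtMatrixYX X Y ε bX dX bY x y G B)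
    (hb : ∀ i : Fin N, |bX i.castSucc - bY i| < ε)
    (hsmall : dX (Fin.last N) - bX (Fin.last N) < 2 * ε)
    (hfarb : ∀ i : Fin N, 2 * ε ≤ |bX (Fin.last N) - bX i.castSucc|) (j : Fin N) :
    B (Fin.last N) j.castSucc = 0 := by
  by_contra h
  obtain ⟨h₁, h₂⟩ := not_not.1 (mt (hB.2.1 (Fin.last N) j) h)
  have := abs_sub_lt_iff.1 (hb j)
  rcases le_abs'.1 (hfarb j) with h' | h' <;> linarith

lemma IsExtMatrixXY.apply_castSucc_last_eq_zero {F : EpsMorphism X Y ε}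
    {A : Matrix (Fin (N + 1)) (Fin (N + 1)) K} (hA : IsExtMatrixXY X Y ε bX bY dY x y F A)
    (hX : X.IsBasisFamily bX dX x) (hY : Y.IsBasisFamily bY dY y) (hbdX : ∀ i, bX i < dX i)
    (hd : ∀ i : Fin N, |dX i.castSucc - dY i| < ε)
    (hsmall : dX (Fin.last N) - bX (Fin.last N) < 2 * ε)
    (hfard : ∀ i : Fin N, 2 * ε ≤ |dX (Fin.last N) - dX i.castSucc|) (j : Fin N) :
    A j.castSucc (Fin.last N) = 0 := by
  by_contra h
  obtain ⟨h₁, h₂⟩ := (hA.isMatrixOf dX).birth_le (i := Fin.last N) h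
  have h₃ := (hA.isMatrixOf dX).death_le hX hY hbdX (i := Fin.last N) h
  have := abs_sub_lt_iff.1 (hd j)
  rcases le_abs'.1 (hfard j) with h' | h' <;> linarith

lemma IsInterleaving.diag_mul_diag_eq_one {F : EpsMorphism X Y ε} {G : EpsMorphism Y X ε}
    (hFG : IsInterleaving X Y ε F G) (hε : 0 ≤ ε) (hY : Y.IsBasisFamily bY dY y)
    (hbdY : ∀ j, bY j < dY j) {A B : Matrix (Fin (N + 1)) (Fin (N + 1)) K}
    (hA : IsExtMatrixXY X Y ε bX bY dY x y F A) (hB : IsExtMatrixYX X Y ε bX dX bY x y G B)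
    (hgapY : ∀ p q : Fin N ⊕ Fin N, p ≠ q →
      2 * ε < |Sum.elim bY dY p - Sum.elim bY dY q|)
    (hb : ∀ i : Fin N, |bX i.castSucc - bY i| < ε)
    (hBlast : ∀ j : Fin N, B (Fin.last N) j.castSucc = 0) (j : Fin N) :
    A j.castSucc j.castSucc * B j.castSucc j.castSucc = 1 := by
  have hA' := hA.isMatrixOf dX
  have hB' := hB.isMatrixOf dY
  have hlive : bY j + ε + ε < dY j := by
    have := add_lt_of_lt_of_gap hgapY (p := .inl j) (q := .inr j) (hbdY j)
    simp only [Sum.elim_inl, Sum.elim_inr] at this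
    linarith
  have h := hFG.symm.mul_apply_eq_one_apply hε hY hB' hA' (by linarith) hlive
  rw [Matrix.mul_apply, Fin.sum_univ_castSucc, Matrix.one_apply_eq] at h
  simp only [Matrix.submatrix_apply, id, hBlast, mul_zero, add_zero] at h
  rw [← h, Finset.sum_eq_single j]
  · intro m _ hmj
    by_contra hne
    obtain ⟨h₁, -⟩ := hA'.birth_le (i := m.castSucc) (left_ne_zero_of_mul hne)
    obtain ⟨h₂, -⟩ := hB'.birth_le (j := m.castSucc) (right_ne_zero_of_mul hne)
    have := abs_sub_lt_iff.1 (hb m)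
    exact hmj (Sum.inl_injective (eq_of_abs_sub_le_of_gap hgapY (p := .inl m) (q := .inl j)
      (abs_sub_le_iff.2 ⟨by simp only [Sum.elim_inl]; linarith,
        by simp only [Sum.elim_inl]; linarith⟩)))
  · simp

lemma bX_add_lt_dX_of_alive (hgapX : ∀ p q : Fin N ⊕ Fin N, p ≠ q →
      2 * ε < |Sum.elim (fun i => bX i.castSucc) (fun i => dX i.castSucc) p -
        Sum.elim (fun i => bX i.castSucc) (fun i => dX i.castSucc) q|)
    (hb : ∀ i : Fin N, |bX i.castSucc - bY i| < ε)
    (hsmall : dX (Fin.last N) - bX (Fin.last N) < 2 * ε)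
    (hfarb : ∀ i : Fin N, 2 * ε ≤ |bX (Fin.last N) - bX i.castSucc|) (j : Fin N)
    (m : Fin (N + 1)) (hbm : bX m ≤ bY j + ε) (hdm : bY j + ε < dX m) :
    bX j.castSucc + ε + ε < dX m := by
  have := abs_sub_lt_iff.1 (hb j)
  induction m using Fin.lastCases with
  | last => rcases le_abs'.1 (hfarb j) with h' | h' <;> linarith
  | cast m =>
    have := add_lt_of_lt_of_gap hgapX (p := .inl j) (q := .inr m)
      (show bX j.castSucc < dX m.castSucc by linarith)
    simp only [Sum.elim_inl, Sum.elim_inr] at this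
    linarith

lemma bY_add_lt_dY_of_alive (hgapY : ∀ p q : Fin N ⊕ Fin N, p ≠ q →
      2 * ε < |Sum.elim bY dY p - Sum.elim bY dY q|)
    (hb : ∀ i : Fin N, |bX i.castSucc - bY i| < ε) (k l : Fin N)
    (hdl : bX k.castSucc + ε < dY l) : bY k + ε + ε < dY l := by
  have := abs_sub_lt_iff.1 (hb k)
  have := add_lt_of_lt_of_gap hgapY (p := .inl k) (q := .inr l)
    (show bY k < dY l by linarith)
  simp only [Sum.elim_inl, Sum.elim_inr] at this
  linarith

end ShortBar

theorem statement9_general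
    (X Y : PersistenceModule K) (ε : ℝ) (hε : 0 ≤ ε)
    (bX dX : Fin (N + 1) → ℝ) (bY dY : Fin N → ℝ)
    (x : ∀ i, X.space (bX i)) (y : ∀ j, Y.space (bY j))
    (hbdX : ∀ i, bX i < dX i) (hbdY : ∀ j, bY j < dY j)
    (hX : X.IsBasisFamily bX dX x) (hY : Y.IsBasisFamily bY dY y)
    -- critical values of `Y` pairwise distinct, with gaps `> 2ε`
    (hgapY : ∀ p q : Fin N ⊕ Fin N, p ≠ q →
        2 * ε < |Sum.elim bY dY p - Sum.elim bY dY q|)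
    -- critical values of the first `N` intervals of `X` pairwise distinct, with gaps `> 2ε`
    (hgapX : ∀ p q : Fin N ⊕ Fin N, p ≠ q →
        2 * ε < |Sum.elim (fun i => bX i.castSucc) (fun i => dX i.castSucc) p -
                 Sum.elim (fun i => bX i.castSucc) (fun i => dX i.castSucc) q|)
    (hb : ∀ i : Fin N, |bX i.castSucc - bY i| < ε)
    (hd : ∀ i : Fin N, |dX i.castSucc - dY i| < ε)
    -- the extra interval `[b, d) = [bX (last), dX (last))` is short
    (hsmall : dX (Fin.last N) - bX (Fin.last N) < 2 * ε)
    -- and far from all other critical values of `X`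
    (hfarb : ∀ i : Fin N, 2 * ε ≤ |bX (Fin.last N) - bX i.castSucc| ∧
        2 * ε ≤ |bX (Fin.last N) - dX i.castSucc|)
    (hfard : ∀ i : Fin N, 2 * ε ≤ |dX (Fin.last N) - bX i.castSucc| ∧
        2 * ε ≤ |dX (Fin.last N) - dX i.castSucc|)
    (F : EpsMorphism X Y ε) (G : EpsMorphism Y X ε)
    (hFG : IsInterleaving X Y ε F G)
    (A B : Matrix (Fin (N + 1)) (Fin (N + 1)) K)
    (hA : IsExtMatrixXY X Y ε bX bY dY x y F A)
    (hB : IsExtMatrixYX X Y ε bX dX bY x y G B) :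
    -- (1)
    (∀ i, A i (Fin.last N) = 0 ∧ A (Fin.last N) i = 0) ∧
    -- (2)
    (IsBasisTransformMatrix bY dY (A.submatrix Fin.castSucc Fin.castSucc) ∧
      IsExtMatrixXY X Y ε bX bY dY x
        (transformBasis Y bY y (A.submatrix Fin.castSucc Fin.castSucc)) F diagOneZero ∧
      IsExtMatrixYX X Y ε bX dX bY x
        (transformBasis Y bY y (A.submatrix Fin.castSucc Fin.castSucc)) G diagOneZero) ∧
    -- (3)
    (IsBasisTransformMatrix (fun i : Fin N => bX i.castSucc) (fun i : Fin N => dX i.castSucc)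
        (B.submatrix Fin.castSucc Fin.castSucc) ∧
      IsBasisTransformMatrix bX dX (extendOne B) ∧
      IsExtMatrixXY X Y ε bX bY dY (transformBasis X bX x (extendOne B)) y F diagOneZero ∧
      IsExtMatrixYX X Y ε bX dX bY (transformBasis X bX x (extendOne B)) y G diagOneZero) := by
  have hA' := hA.isMatrixOf dX
  have hB' := hB.isMatrixOf dY
  have hBlast := hB.apply_last_castSucc_eq_zero hb hsmall fun i => (hfarb i).1
  have hAlast := hA.apply_castSucc_last_eq_zero hX hY hbdX hd hsmall fun i => (hfard i).2
  have hdiag := hFG.diag_mul_diag_eq_one hε hY hbdY hA hB hgapY hb hBlast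
  have hAlive (j : Fin N) := hA'.birth_le (j := j) (i := j.castSucc)
    (left_ne_zero_of_mul_eq_one (hdiag j))
  have hBlive (j : Fin N) := hB'.birth_le (j := j.castSucc) (i := j)
    (right_ne_zero_of_mul_eq_one (hdiag j))
  have hTA : IsBasisTransformMatrix bY dY (A.submatrix Fin.castSucc Fin.castSucc) :=
    hA'.isBasisTransformMatrix_submatrix hX hY hbdX Fin.castSucc id hb hd hgapY
      fun j => left_ne_zero_of_mul_eq_one (hdiag j)
  have hTB : IsBasisTransformMatrix (fun i : Fin N => bX i.castSucc) (fun i => dX i.castSucc)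
      (B.submatrix Fin.castSucc Fin.castSucc) :=
    hB'.isBasisTransformMatrix_submatrix hY hX hbdY id Fin.castSucc
      (fun i => abs_sub_comm (bX _) _ ▸ hb i) (fun i => abs_sub_comm (dX _) _ ▸ hd i) hgapX
      fun j => right_ne_zero_of_mul_eq_one (hdiag j)
  have hFx (k : Fin N) : F.maps (bX k.castSucc) (bX k.castSucc + ε) rfl (x k.castSucc) =
      Y.pushTo bY (transformBasis Y bY y (A.submatrix Fin.castSucc Fin.castSucc))
        (bX k.castSucc + ε) k :=
    hA'.map_eq_pushTo_transformBasis (fun j i h => (hTA.2 j i h).1) (fun _ => rfl) (hAlive k).1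
  have hGy (j : Fin N) : G.maps (bY j) (bY j + ε) rfl (y j) =
      X.pushTo bX (transformBasis X bX x (extendOne B)) (bY j + ε) j.castSucc :=
    hB'.map_eq_pushTo_transformBasis (fun j i h => (hTB.extendOne.2 j i h).1)
      (extendOne_apply_castSucc (hBlast j)) (hBlive j).1
  have hFxlast : F.maps _ _ rfl (x (Fin.last N)) = 0 := by simp [hA.1, hAlast]
  refine ⟨fun i => ⟨?_, hA.2.2 i⟩, ⟨hTA, isExtMatrixXY_diagOneZero hFx hFxlast hAlive,
    isExtMatrixYX_diagOneZero (fun j => ?_) hBlive⟩, hTB, hTB.extendOne,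
    isExtMatrixXY_diagOneZero (fun k => ?_) (by rwa [transformBasis_extendOne_last]) hAlive,
    isExtMatrixYX_diagOneZero hGy hBlive⟩
  · induction i using Fin.lastCases with
    | last => exact hA.2.2 _
    | cast i => exact hAlast i
  · rw [pushTo_of_le (hBlive j).1]
    exact hFG.map_eq_trans_of_map_eq_trans hε hX (hAlive j).1 (hBlive j).1
      (bX_add_lt_dX_of_alive hgapX hb hsmall (fun i => (hfarb i).1) j)
      ((hFx j).trans (pushTo_of_le _))
  · rw [pushTo_of_le (hAlive k).1]
    exact hFG.symm.map_eq_trans_of_map_eq_trans hε hY (hBlive k).1 (hAlive k).1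
      (fun l _ => bY_add_lt_dY_of_alive hgapY hb k l) ((hGy k).trans (pushTo_of_le _))

/-- (Proposition `newinterval`.) `X` has one extra short interval `[b, d)`
(with `d - b < 2ε`, far from all other critical values) compared with `Y`; with respect to the
extended bases, the matrix of `α` has zero last row and column, its restriction is a basis
transformation matrix for `Y`, after transforming, `Mat(α) = diag(1,…,1,0) = Mat(β)`; and
symmetrically for the matrix of `β` acting on the basis of `X`. -/
theorem statement9
    (X Y : PersistenceModule K) (ε : ℝ) (hε : 0 ≤ ε)
    (bX dX : Fin (N + 1) → ℝ) (bY dY : Fin N → ℝ)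
    (x : ∀ i, X.space (bX i)) (y : ∀ j, Y.space (bY j))
    (hbdX : ∀ i, bX i < dX i) (hbdY : ∀ j, bY j < dY j)
    (hdistX : Function.Injective fun i => (bX i, dX i))
    (hdistY : Function.Injective fun j => (bY j, dY j))
    (hX : X.IsBasisFamily bX dX x) (hY : Y.IsBasisFamily bY dY y)
    -- critical values of `Y` pairwise distinct, with gaps `> 2ε`
    (hgapY : ∀ p q : Fin N ⊕ Fin N, p ≠ q →
        2 * ε < |Sum.elim bY dY p - Sum.elim bY dY q|)
    -- critical values of the first `N` intervals of `X` pairwise distinct, with gaps `> 2ε`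
    (hgapX : ∀ p q : Fin N ⊕ Fin N, p ≠ q →
        2 * ε < |Sum.elim (fun i => bX i.castSucc) (fun i => dX i.castSucc) p -
                 Sum.elim (fun i => bX i.castSucc) (fun i => dX i.castSucc) q|)
    (hb : ∀ i : Fin N, |bX i.castSucc - bY i| < ε)
    (hd : ∀ i : Fin N, |dX i.castSucc - dY i| < ε)
    -- the extra interval `[b, d) = [bX (last), dX (last))` is short
    (hsmall : dX (Fin.last N) - bX (Fin.last N) < 2 * ε)
    -- and far from all other critical values of `X`
    (hfarb : ∀ i : Fin N, 2 * ε ≤ |bX (Fin.last N) - bX i.castSucc| ∧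
        2 * ε ≤ |bX (Fin.last N) - dX i.castSucc|)
    (hfard : ∀ i : Fin N, 2 * ε ≤ |dX (Fin.last N) - bX i.castSucc| ∧
        2 * ε ≤ |dX (Fin.last N) - dX i.castSucc|)
    (F : EpsMorphism X Y ε) (G : EpsMorphism Y X ε)
    (hFG : IsInterleaving X Y ε F G)
    (A B : Matrix (Fin (N + 1)) (Fin (N + 1)) K)
    (hA : IsExtMatrixXY X Y ε bX bY dY x y F A)
    (hB : IsExtMatrixYX X Y ε bX dX bY x y G B) :
    -- (1)
    (∀ i, A i (Fin.last N) = 0 ∧ A (Fin.last N) i = 0) ∧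
    -- (2)
    (IsBasisTransformMatrix bY dY (A.submatrix Fin.castSucc Fin.castSucc) ∧
      IsExtMatrixXY X Y ε bX bY dY x
        (transformBasis Y bY y (A.submatrix Fin.castSucc Fin.castSucc)) F diagOneZero ∧
      IsExtMatrixYX X Y ε bX dX bY x
        (transformBasis Y bY y (A.submatrix Fin.castSucc Fin.castSucc)) G diagOneZero) ∧
    -- (3)
    (IsBasisTransformMatrix (fun i : Fin N => bX i.castSucc) (fun i : Fin N => dX i.castSucc)
        (B.submatrix Fin.castSucc Fin.castSucc) ∧
      IsBasisTransformMatrix bX dX (extendOne B) ∧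
      IsExtMatrixXY X Y ε bX bY dY (transformBasis X bX x (extendOne B)) y F diagOneZero ∧
      IsExtMatrixYX X Y ε bX dX bY (transformBasis X bX x (extendOne B)) y G diagOneZero) :=
  statement9_general X Y ε hε bX dX bY dY x y hbdX hbdY hX hY hgapY hgapX hb hd hsmall hfarb hfard F
    G hFG A B hA hB

end Statement9
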